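/- arXiv:1607.03717 — 2 statements merged into one kernel-verified Lean document; each statement's English description precedes it below -/
import Mathlib

section
/- Let X = diag(x_1ᵀ, …, x_nᵀ) be the n × np block-diagonal matrix with rows x_iᵀ ∈ ℝ^{1×p}, let Z ∈ ℝ^{n×q}, Q_Z = I_n − Z(ZᵀZ)⁻¹Zᵀ (assuming ZᵀZ invertible), A = D ⊗ I_p, and ϑ > 0. If the smallest eigenvalue of Σᵢ (x_iᵀ, z_iᵀ)ᵀ(x_iᵀ, z_iᵀ) is positive, then XᵀQ_Z X + ϑ AᵀA is positive definite, hence invertible. -/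
/-!
Both summands are Gram matrices, `XᵀQ_Z X = (Q_Z X)ᵀ(Q_Z X)` because `Q_Z` is a symmetric
idempotent, so the sum is positive definite as soon as `ker (Q_Z X) ∩ ker A = 0`. A vector `a` in
`ker A` has all its blocks equal to some `c`, so `X a = (x_i ⬝ c)_i`; if moreover `Q_Z X a = 0`,
then `X a = Z w` for some `w`, i.e. `(c, -w)` is annihilated by the matrix with rows `(x_iᵀ, z_iᵀ)`,
whose Gram matrix is the positive definite `Σᵢ (x_iᵀ, z_iᵀ)ᵀ(x_iᵀ, z_iᵀ)`. Hence `c = 0`.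
-/

open Matrix Kronecker

namespace Matrix

section Projection

variable {R m q : Type*} [CommRing R] [Fintype m] [Fintype q] [DecidableEq q] (Z : Matrix m q R)

theorem isSymm_mul_inv_mul_transpose : (Z * (Zᵀ * Z)⁻¹ * Zᵀ).IsSymm := by
  rw [IsSymm, transpose_mul, transpose_mul, transpose_transpose, transpose_nonsing_inv,
    transpose_mul, transpose_transpose, Matrix.mul_assoc]

theorem isIdempotentElem_mul_inv_mul_transpose (hZ : IsUnit (Zᵀ * Z)) :
    IsIdempotentElem (Z * (Zᵀ * Z)⁻¹ * Zᵀ) := by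
  have hdet := (isUnit_iff_isUnit_det _).mp hZ
  calc Z * (Zᵀ * Z)⁻¹ * Zᵀ * (Z * (Zᵀ * Z)⁻¹ * Zᵀ)
      = Z * ((Zᵀ * Z)⁻¹ * (Zᵀ * Z)) * (Zᵀ * Z)⁻¹ * Zᵀ := by simp only [Matrix.mul_assoc]
    _ = Z * (Zᵀ * Z)⁻¹ * Zᵀ := by rw [nonsing_inv_mul _ hdet, Matrix.mul_one]

theorem exists_mulVec_eq_of_one_sub_mul_inv_mul_transpose_mulVec_eq_zero [DecidableEq m]
    {u : m → R} (hu : (1 - Z * (Zᵀ * Z)⁻¹ * Zᵀ) *ᵥ u = 0) : ∃ w, Z *ᵥ w = u := by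
  refine ⟨((Zᵀ * Z)⁻¹ * Zᵀ) *ᵥ u, ?_⟩
  rw [sub_mulVec, one_mulVec, sub_eq_zero] at hu
  rw [mulVec_mulVec, ← Matrix.mul_assoc, ← hu]

end Projection

theorem transpose_mul_mul_eq_of_isSymm_of_isIdempotentElem {R m n : Type*} [CommRing R]
    [Fintype m] {Q : Matrix m m R} (hsymm : Q.IsSymm) (hidem : IsIdempotentElem Q)
    (X : Matrix m n R) : Xᵀ * Q * X = (Q * X)ᵀ * (Q * X) := by
  rw [transpose_mul, hsymm.eq]
  nth_rw 1 [← hidem.eq]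
  simp only [Matrix.mul_assoc]

theorem sum_vecMulVec_self_eq_transpose_mul {R ι n : Type*} [CommSemiring R] [Fintype ι]
    (u : ι → n → R) : ∑ i, vecMulVec (u i) (u i) = (of u)ᵀ * of u := by
  ext j k
  simp [mul_apply, vecMulVec_apply, sum_apply]

section RCLike

open scoped ComplexOrder

variable {𝕜 n : Type*} [RCLike 𝕜] [Fintype n]

theorem PosSemidef.posDef_add_of_mulVec_eq_zero {A B : Matrix n n 𝕜} (hA : A.PosSemidef)
    (hB : B.PosSemidef) (hker : ∀ v, A *ᵥ v = 0 → B *ᵥ v = 0 → v = 0) : (A + B).PosDef := by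
  refine .of_dotProduct_mulVec_pos (hA.isHermitian.add hB.isHermitian) fun v hv => ?_
  have hAv := hA.dotProduct_mulVec_nonneg v
  have hBv := hB.dotProduct_mulVec_nonneg v
  rw [add_mulVec, dotProduct_add]
  refine (add_nonneg hAv hBv).lt_of_ne fun h => hv (hker v ?_ ?_)
  · exact (hA.dotProduct_mulVec_zero_iff v).mp ((add_eq_zero_iff_of_nonneg hAv hBv).mp h.symm).1
  · exact (hB.dotProduct_mulVec_zero_iff v).mp ((add_eq_zero_iff_of_nonneg hAv hBv).mp h.symm).2

end RCLike

section Difference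

variable {R ι p : Type*} [CommRing R] [Fintype ι] [LinearOrder ι] [Fintype p] [DecidableEq p]
  {D : Matrix {r : ι × ι // r.1 < r.2} ι R}

theorem kronecker_one_mulVec_apply
    (hD : ∀ r k, D r k = (if k = r.1.1 then (1 : R) else 0) - (if k = r.1.2 then 1 else 0))
    (a : ι × p → R) (r : {r : ι × ι // r.1 < r.2}) (l : p) :
    ((D ⊗ₖ (1 : Matrix p p R)) *ᵥ a) (r, l) = a (r.1.1, l) - a (r.1.2, l) := by
  simp [mulVec, dotProduct, Fintype.sum_prod_type, one_apply, hD, sub_mul]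

theorem apply_eq_of_kronecker_one_mulVec_eq_zero
    (hD : ∀ r k, D r k = (if k = r.1.1 then (1 : R) else 0) - (if k = r.1.2 then 1 else 0))
    {a : ι × p → R} (ha : (D ⊗ₖ (1 : Matrix p p R)) *ᵥ a = 0) (i j : ι) (l : p) :
    a (i, l) = a (j, l) := by
  have hrow (i j : ι) (hij : i < j) : a (i, l) = a (j, l) := by
    simpa [kronecker_one_mulVec_apply hD, sub_eq_zero] using congrFun ha (⟨(i, j), hij⟩, l)
  rcases lt_trichotomy i j with h | rfl | h
  · exact hrow i j h
  · rfl
  · exact (hrow j i h).symm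

end Difference

theorem of_ite_fst_eq_mulVec {R m p : Type*} [CommSemiring R] [Fintype m] [DecidableEq m]
    [Fintype p] (x : m → p → R) (a : m × p → R) :
    (of fun i jl => if jl.1 = i then x i jl.2 else 0) *ᵥ a = fun i => x i ⬝ᵥ fun l => a (i, l) := by
  ext i
  simp [mulVec, dotProduct, Fintype.sum_prod_type]

theorem eq_zero_of_forall_dotProduct_eq {K ι p q : Type*} [Field K] [Fintype ι] [Fintype p]
    [Fintype q] [DecidableEq p] [DecidableEq q] {x : ι → p → K} {z : ι → q → K}
    (hU : IsUnit ((of fun i => Sum.elim (x i) (z i))ᵀ * of fun i => Sum.elim (x i) (z i)))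
    {c : p → K} {w : q → K} (h : ∀ i, x i ⬝ᵥ c = z i ⬝ᵥ w) : c = 0 := by
  have hker : (of fun i => Sum.elim (x i) (z i)) *ᵥ Sum.elim c (-w) = 0 := by
    ext i
    simp [mulVec, sumElim_dotProduct_sumElim, h i]
  have hv : Sum.elim c (-w) = 0 :=
    mulVec_injective_iff_isUnit.mpr hU (by rw [← mulVec_mulVec, hker, mulVec_zero, mulVec_zero])
  ext l
  simpa using congrFun hv (.inl l)

end Matrix

/-- If ZᵀZ is invertible and the smallest eigenvalue of
Σᵢ (xᵢᵀ, zᵢᵀ)ᵀ(xᵢᵀ, zᵢᵀ) is positive, then XᵀQ_Z X + ϑ AᵀA is positive definite,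
hence invertible. -/
theorem stmt_4 (n p q : ℕ) (x : Fin n → Fin p → ℝ) (z : Fin n → Fin q → ℝ)
    (vth : ℝ) (hvth : 0 < vth)
    (D : Matrix {r : Fin n × Fin n // r.1 < r.2} (Fin n) ℝ)
    (hD : ∀ r k, D r k = (if k = r.1.1 then (1 : ℝ) else 0) - (if k = r.1.2 then 1 else 0))
    (Z : Matrix (Fin n) (Fin q) ℝ) (hZ : Z = Matrix.of z)
    (hZZ : IsUnit (Zᵀ * Z))
    (M : Matrix (Fin p ⊕ Fin q) (Fin p ⊕ Fin q) ℝ)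
    (hM : M = ∑ i, Matrix.vecMulVec (Sum.elim (x i) (z i)) (Sum.elim (x i) (z i)))
    (hMpd : M.PosDef) :
    let X : Matrix (Fin n) (Fin n × Fin p) ℝ :=
      Matrix.of fun i jl => if jl.1 = i then x i jl.2 else 0
    let A := D ⊗ₖ (1 : Matrix (Fin p) (Fin p) ℝ)
    let Qz := (1 : Matrix (Fin n) (Fin n) ℝ) - Z * (Zᵀ * Z)⁻¹ * Zᵀ
    (Xᵀ * Qz * X + vth • (Aᵀ * A)).PosDef ∧ IsUnit (Xᵀ * Qz * X + vth • (Aᵀ * A)) := by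
  intro X A Qz
  have hQX : Xᵀ * Qz * X = (Qz * X)ᵀ * (Qz * X) :=
    transpose_mul_mul_eq_of_isSymm_of_isIdempotentElem
      (isSymm_one.sub (isSymm_mul_inv_mul_transpose Z))
      (isIdempotentElem_mul_inv_mul_transpose Z hZZ).one_sub X
  have hker (a : Fin n × Fin p → ℝ) (hQ : (Qz * X) *ᵥ a = 0) (hA : A *ᵥ a = 0) : a = 0 := by
    ext ⟨i, l⟩
    set c : Fin p → ℝ := fun l => a (i, l)
    have hXa : X *ᵥ a = fun j => x j ⬝ᵥ c := by
      rw [of_ite_fst_eq_mulVec]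
      ext j
      simp only [c, apply_eq_of_kronecker_one_mulVec_eq_zero hD hA j i]
    obtain ⟨w, hw⟩ := exists_mulVec_eq_of_one_sub_mul_inv_mul_transpose_mulVec_eq_zero Z
      (u := X *ᵥ a) (by rwa [mulVec_mulVec])
    have hc : c = 0 := eq_zero_of_forall_dotProduct_eq
      (by simpa [hM, sum_vecMulVec_self_eq_transpose_mul] using hMpd.isUnit)
      fun j => by simpa [hZ, mulVec] using (congrFun (hw.trans hXa) j).symm
    exact congrFun hc l
  have hpd : (Xᵀ * Qz * X + vth • (Aᵀ * A)).PosDef := by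
    rw [hQX, ← conjTranspose_eq_transpose_of_trivial, ← conjTranspose_eq_transpose_of_trivial]
    refine PosSemidef.posDef_add_of_mulVec_eq_zero (posSemidef_conjTranspose_mul_self _)
      ((posSemidef_conjTranspose_mul_self A).smul hvth.le) fun a h₁ h₂ => hker a ?_ ?_
    · exact (conjTranspose_mul_self_mulVec_eq_zero _ a).mp h₁
    · rw [smul_mulVec, smul_eq_zero_iff_right hvth.ne'] at h₂
      exact (conjTranspose_mul_self_mulVec_eq_zero A a).mp h₂
  exact ⟨hpd, hpd.isUnit⟩
end

section
/- For ζ ∈ ℝ^p, γ > 1/ϑ, λ > 0, ϑ > 0, and with the MCP penalty p_γ(t, λ) = λ∫₀^{|t|}(1 − x/(γλ))₊ dx, if ‖ζ‖ > γλ then δ = ζ is the minimizer of (ϑ/2)‖ζ − δ‖² + p_γ(‖δ‖, λ) over δ ∈ ℝ^p. -/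
/-!
For `t ≥ 0` the MCP penalty is `λ (γλ/2 - (γλ - t)₊² / (2γλ))`: constant, equal to `γλ²/2`, from
`t = γλ` on. At `δ = ζ` the objective is therefore `γλ²/2`, and any other `δ` saves at most
`(1/(2γ)) (γλ - ‖δ‖)₊²` in penalty. Since `(γλ - ‖δ‖)₊ ≤ ‖ζ‖ - ‖δ‖ ≤ ‖ζ - δ‖` and `1/γ < ϑ`,
this saving is paid for by the quadratic term `(ϑ/2) ‖ζ - δ‖²`.
-/

open intervalIntegral

lemma integral_max_one_sub_div_of_le {c s : ℝ} (hc : 0 < c) (hs : 0 ≤ s) (hsc : s ≤ c) :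
    ∫ x in (0 : ℝ)..s, max (1 - x / c) 0 = s - s ^ 2 / (2 * c) := by
  rw [integral_congr (g := fun x => 1 - x / c)]
  · rw [integral_sub intervalIntegrable_const (intervalIntegrable_id.div_const c)]
    simp [integral_div, integral_id]
    ring
  · intro x hx
    rw [Set.uIcc_of_le hs] at hx
    have : 0 ≤ 1 - x / c := by rw [sub_nonneg, div_le_one hc]; exact hx.2.trans hsc
    simp [max_eq_left this]

lemma integral_max_one_sub_div {c s : ℝ} (hc : 0 < c) (hs : 0 ≤ s) :
    ∫ x in (0 : ℝ)..s, max (1 - x / c) 0 = c / 2 - max (c - s) 0 ^ 2 / (2 * c) := by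
  rcases le_total s c with hsc | hcs
  · rw [integral_max_one_sub_div_of_le hc hs hsc, max_eq_left (sub_nonneg.2 hsc)]
    field_simp
    ring
  · have hint (a b : ℝ) :
        IntervalIntegrable (fun x : ℝ => max (1 - x / c) 0) MeasureTheory.volume a b :=
      (by fun_prop : Continuous fun x : ℝ => max (1 - x / c) 0).intervalIntegrable a b
    have tail : ∫ x in c..s, max (1 - x / c) 0 = 0 := by
      rw [integral_congr (g := fun _ => (0 : ℝ))]
      · simp
      · intro x hx
        rw [Set.uIcc_of_le hcs] at hx
        have : 1 - x / c ≤ 0 := by rw [sub_nonpos, le_div_iff₀ hc, one_mul]; exact hx.1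
        simp [max_eq_right this]
    rw [← integral_add_adjacent_intervals (hint 0 c) (hint c s),
      integral_max_one_sub_div_of_le hc hc.le le_rfl, tail, max_eq_right (sub_nonpos.2 hcs)]
    field_simp
    ring

lemma mul_sq_div_le_of_le {lam c vth m r : ℝ} (hc : 0 < c) (hlam : 0 ≤ lam)
    (hlamc : lam ≤ c * vth) (hm : 0 ≤ m) (hmr : m ≤ r) :
    lam * m ^ 2 / (2 * c) ≤ vth / 2 * r ^ 2 := by
  rw [div_le_iff₀ (by positivity)]
  calc lam * m ^ 2 ≤ lam * r ^ 2 := mul_le_mul_of_nonneg_left (pow_le_pow_left₀ hm hmr 2) hlam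
    _ ≤ c * vth * r ^ 2 := mul_le_mul_of_nonneg_right hlamc (sq_nonneg r)
    _ = vth / 2 * r ^ 2 * (2 * c) := by ring

/-- For the MCP penalty with γ > 1/ϑ, if ‖ζ‖ > γλ then δ = ζ minimizes
(ϑ/2)‖ζ − δ‖² + p_γ(‖δ‖, λ). -/
theorem stmt_18 (p : ℕ) (γ lam vth : ℝ) (hγ : 1 / vth < γ) (hlam : 0 < lam) (hvth : 0 < vth)
    (ζ : EuclideanSpace ℝ (Fin p)) (hζ : γ * lam < ‖ζ‖) :
    let pen : ℝ → ℝ := fun t => lam * ∫ x in (0 : ℝ)..|t|, max (1 - x / (γ * lam)) 0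
    ∀ δ : EuclideanSpace ℝ (Fin p),
      vth / 2 * ‖ζ - ζ‖ ^ 2 + pen ‖ζ‖ ≤ vth / 2 * ‖ζ - δ‖ ^ 2 + pen ‖δ‖ := by
  intro pen δ
  have hγvth : 1 < γ * vth := by rwa [div_lt_iff₀ hvth] at hγ
  have hc : 0 < γ * lam := mul_pos (lt_trans (by positivity) hγ) hlam
  have hpen (v : EuclideanSpace ℝ (Fin p)) : pen ‖v‖ =
      lam * (γ * lam / 2 - max (γ * lam - ‖v‖) 0 ^ 2 / (2 * (γ * lam))) := by
    simp only [pen, abs_norm, integral_max_one_sub_div hc (norm_nonneg v)]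
  have hramp : max (γ * lam - ‖δ‖) 0 ≤ ‖ζ - δ‖ :=
    max_le (by linarith [norm_sub_norm_le ζ δ]) (norm_nonneg _)
  have hgap := mul_sq_div_le_of_le (vth := vth) hc hlam.le (by nlinarith) (le_max_right _ _) hramp
  rw [hpen, hpen, max_eq_right (by linarith), sub_self, norm_zero]
  linear_combination hgap
end
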